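/- Let p : ℕ → (0,1] satisfy n·p(n) → ∞, and let (G_n) be a sequence of graphs with |G_n| = n such that sup_n s_p(T,G_n) < ∞ for every finite tree T. Then for each finite tree T on k vertices, the number of non-injective homomorphisms from T to G_n is o(n^k·p(n)^{k−1}) as n → ∞; in particular t_p(T,G_n) − s_p(T,G_n) → 0 and t_p(T,G_n) is bounded. -/

import Mathlib

open MeasureTheory Set Filter
open scoped ENNReal Classical

noncomputable section

/-- The (0-based) index of the subinterval `((i)/n, (i+1)/n]` of `[0,1]` containing `x`. -/
def idx (n : ℕ) (x : ℝ) : ℕ := ⌈x * n⌉₊ - 1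

/-- The subset of `[0,1]` corresponding to a set of vertices of a graph on `Fin n`:
the union of the intervals `(i/n, (i+1)/n]` for `i ∈ X` (vertices `0`-indexed). -/
def vtxSet (n : ℕ) (X : Finset (Fin n)) : Set ℝ :=
  ⋃ i ∈ X, Ioc ((i : ℝ) / n) (((i : ℝ) + 1) / n)

/-- The kernel associated to a graph `G` on `{1,…,n}` and normalizing constant `p`:
it takes the value `1/p` on `((i−1)/n, i/n] × ((j−1)/n, j/n]` whenever `ij ∈ E(G)`,
and `0` elsewhere. -/
def graphKernel {n : ℕ} (p : ℝ) (G : SimpleGraph (Fin n)) : ℝ → ℝ → ℝ := fun x y =>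
  if h : x ∈ Ioc (0:ℝ) 1 ∧ y ∈ Ioc (0:ℝ) 1 ∧ idx n x < n ∧ idx n y < n then
    (if G.Adj ⟨idx n x, h.2.2.1⟩ ⟨idx n y, h.2.2.2⟩ then 1 / p else 0)
  else 0

/-- The cut norm of `W : [0,1]² → ℝ`. -/
def cutNorm (W : ℝ → ℝ → ℝ) : ℝ :=
  sSup {r | ∃ S T : Set ℝ, MeasurableSet S ∧ MeasurableSet T ∧
    S ⊆ Icc 0 1 ∧ T ⊆ Icc 0 1 ∧ r = |∫ q in S ×ˢ T, W q.1 q.2|}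

/-- `τ` is a Lebesgue-measure-preserving bijection of `[0,1]`. -/
def MPBij (τ : ℝ → ℝ) : Prop :=
  MeasurePreserving τ (volume.restrict (Icc 0 1)) (volume.restrict (Icc 0 1)) ∧
    BijOn τ (Icc 0 1) (Icc 0 1)

/-- The cut distance between two kernels. -/
def cutDist (κ₁ κ₂ : ℝ → ℝ → ℝ) : ℝ :=
  sInf {r | ∃ τ : ℝ → ℝ, MPBij τ ∧ r = cutNorm (fun x y => κ₁ x y - κ₂ (τ x) (τ y))}

/-- The number of homomorphisms from `F` to `G`. -/
def homCount {α β : Type*} (F : SimpleGraph α) (G : SimpleGraph β) : ℕ :=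
  Nat.card (F →g G)

/-- The number of injective homomorphisms (embeddings) from `F` to `G`. -/
def embCount {α β : Type*} (F : SimpleGraph α) (G : SimpleGraph β) : ℕ :=
  Nat.card {φ : F →g G // Function.Injective φ}

/-- The number of edges of a graph. -/
def edgeCount {α : Type*} (F : SimpleGraph α) : ℕ := Nat.card F.edgeSet

/-- The normalized homomorphism count `t_p(F,G)`. -/
def tDen {α β : Type*} [Fintype α] [Fintype β] (p : ℝ) (F : SimpleGraph α)
    (G : SimpleGraph β) : ℝ :=
  homCount F G / (p ^ edgeCount F * (Fintype.card β : ℝ) ^ Fintype.card α)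

/-- The normalized embedding count `s_p(F,G)`. -/
def sDen {α β : Type*} [Fintype α] [Fintype β] (p : ℝ) (F : SimpleGraph α)
    (G : SimpleGraph β) : ℝ :=
  embCount F G / (p ^ edgeCount F * ((Fintype.card β).descFactorial (Fintype.card α) : ℝ))

/-- The homomorphism density `s(F,κ)` of a finite graph in a kernel. -/
def homDensity {α : Type*} [Fintype α] (F : SimpleGraph α) (κ : ℝ → ℝ → ℝ) : ℝ :=
  ∫ x in Set.univ.pi (fun _ : α => Icc (0:ℝ) 1),
    ∏ e ∈ F.edgeFinset,
      Sym2.lift ⟨fun i j => (κ (x i) (x j) + κ (x j) (x i)) / 2,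
        fun i j => by dsimp only; rw [add_comm (κ (x i) (x j)) (κ (x j) (x i))]⟩ e

/-- The homomorphism density as a lower integral (for possibly unbounded kernels). -/
def homDensityL {α : Type*} [Fintype α] (F : SimpleGraph α) (κ : ℝ → ℝ → ℝ) : ℝ≥0∞ :=
  ∫⁻ x in Set.univ.pi (fun _ : α => Icc (0:ℝ) 1),
    ∏ e ∈ F.edgeFinset,
      Sym2.lift ⟨fun i j => ENNReal.ofReal ((κ (x i) (x j) + κ (x j) (x i)) / 2),
        fun i j => by dsimp only; rw [add_comm (κ (x i) (x j)) (κ (x j) (x i))]⟩ e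

/-- A kernel: a symmetric measurable function `[0,1]² → [0,∞)`. -/
def IsKernel (κ : ℝ → ℝ → ℝ) : Prop :=
  Measurable (Function.uncurry κ) ∧ (∀ x y, κ x y = κ y x) ∧ ∀ x y, 0 ≤ κ x y

/-- A kernel taking values in `[0,C]`. -/
def IsKernelBdd (κ : ℝ → ℝ → ℝ) (C : ℝ) : Prop :=
  Measurable (Function.uncurry κ) ∧ (∀ x y, κ x y = κ y x) ∧ ∀ x y, κ x y ∈ Icc 0 C

/-- A standard kernel: a symmetric measurable function `[0,1]² → [0,1]`. -/
def IsStdKernel (κ : ℝ → ℝ → ℝ) : Prop := IsKernelBdd κ 1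

/-- A doubly stochastic measure: a Borel measure on `[0,1]²` both of whose marginals
are Lebesgue measure on `[0,1]`. -/
def IsDoublyStochastic (μ : Measure (ℝ × ℝ)) : Prop :=
  μ.map Prod.fst = volume.restrict (Icc 0 1) ∧ μ.map Prod.snd = volume.restrict (Icc 0 1)

/-- The quantity `d_μ(κ₁,κ₂)`. -/
def dMu (μ : Measure (ℝ × ℝ)) (κ₁ κ₂ : ℝ → ℝ → ℝ) : ℝ :=
  sSup {r | ∃ S T : Set (ℝ × ℝ), MeasurableSet S ∧ MeasurableSet T ∧
    S ⊆ Icc 0 1 ×ˢ Icc 0 1 ∧ T ⊆ Icc 0 1 ×ˢ Icc 0 1 ∧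
    r = |∫ w in S ×ˢ T, (κ₁ w.1.1 w.2.1 - κ₂ w.1.2 w.2.2) ∂(μ.prod μ)|}

/-- Equivalence of kernels via a coupling. -/
def KernelEquiv (κ₁ κ₂ : ℝ → ℝ → ℝ) : Prop :=
  ∃ μ : Measure (ℝ × ℝ), IsDoublyStochastic μ ∧
    ∀ᵐ w ∂(μ.prod μ), κ₁ w.1.1 w.2.1 = κ₂ w.1.2 w.2.2

/-- `e_G(A,B)`: the number of ordered pairs `(i,j) ∈ A × B` with `ij ∈ E(G)`. -/
def ePairs {n : ℕ} (G : SimpleGraph (Fin n)) (A B : Finset (Fin n)) : ℕ :=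
  ((A ×ˢ B).filter fun q => G.Adj q.1 q.2).card

/-- The normalized density `d_p(A,B)`. -/
def dDens {n : ℕ} (p : ℝ) (G : SimpleGraph (Fin n)) (A B : Finset (Fin n)) : ℝ :=
  ePairs G A B / (p * A.card * B.card)

/-- A sequence of graphs has density bounded by `C`. -/
def DensityBoundedBy (p : ℕ → ℝ) (G : ∀ n, SimpleGraph (Fin n)) (C : ℝ) : Prop :=
  ∀ ε > (0:ℝ), ∀ δ > (0:ℝ), ∀ᶠ n in atTop, ∀ A B : Finset (Fin n),
    ε * n ≤ A.card → ε * n ≤ B.card → dDens (p n) (G n) A B ≤ C + δ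

/-- The parts of a partition of `Fin n` indexed by `Fin k`, given as a colouring. -/
def fiber {n k : ℕ} (c : Fin n → Fin k) (a : Fin k) : Finset (Fin n) :=
  Finset.univ.filter fun v => c v = a

/-- The finite-type kernel `G/Π` associated to a partition of the vertex set of `G`. -/
def partKernel {n k : ℕ} (p : ℝ) (G : SimpleGraph (Fin n)) (c : Fin n → Fin k) :
    ℝ → ℝ → ℝ := fun x y =>
  if h : x ∈ Ioc (0:ℝ) 1 ∧ y ∈ Ioc (0:ℝ) 1 ∧ idx n x < n ∧ idx n y < n then
    dDens p G (fiber c (c ⟨idx n x, h.2.2.1⟩)) (fiber c (c ⟨idx n y, h.2.2.2⟩))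
  else 0

/-- A partition is weakly `(ε,p)`-regular for `G`. -/
def WeaklyRegular {n k : ℕ} (p ε : ℝ) (G : SimpleGraph (Fin n)) (c : Fin n → Fin k) : Prop :=
  cutNorm (fun x y => graphKernel p G x y - partKernel p G c x y) ≤ ε

/-- `(A,B)` is an `(ε,p)`-regular pair for `G`. -/
def RegPair {n : ℕ} (p ε : ℝ) (G : SimpleGraph (Fin n)) (A B : Finset (Fin n)) : Prop :=
  ∀ A' ⊆ A, ∀ B' ⊆ B, ε * A.card ≤ A'.card → ε * B.card ≤ B'.card →
    |dDens p G A' B' - dDens p G A B| ≤ ε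

/-- An `(ε,p)`-regular partition of `G` into `k` parts. -/
def RegPartition {n k : ℕ} (p ε : ℝ) (G : SimpleGraph (Fin n)) (c : Fin n → Fin k) : Prop :=
  (∀ a : Fin k, (fiber c a).card = n / k ∨ (fiber c a).card = n / k + 1) ∧
  ((Finset.univ.filter (fun q : Fin k × Fin k =>
      q.1 < q.2 ∧ ¬ RegPair p ε G (fiber c q.1) (fiber c q.2))).card : ℝ)
    ≤ ε * ((k : ℝ) * ((k : ℝ) - 1) / 2)

/-- The number of walks `v₀v₁⋯v_ℓ` in `G` with `v_i ∈ X_i` for each `i`. -/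
def walkCount {n ℓ : ℕ} (G : SimpleGraph (Fin n)) (X : Fin (ℓ+1) → Finset (Fin n)) : ℕ :=
  Nat.card {v : Fin (ℓ+1) → Fin n //
    (∀ i, v i ∈ X i) ∧ ∀ i : Fin ℓ, G.Adj (v i.castSucc) (v i.succ)}

/-- `κ(X₀,X₁,…,X_ℓ)`: the kernel analogue of the walk count. -/
def kernelWalk {ℓ : ℕ} (κ : ℝ → ℝ → ℝ) (X : Fin (ℓ+1) → Set ℝ) : ℝ :=
  ∫ x in Set.univ.pi X, ∏ i : Fin ℓ, κ (x i.castSucc) (x i.succ)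

/-- `p_t(u,v)`: the number of paths of length `t` in `G` from `u` to `v`. -/
def pathCount {n : ℕ} (G : SimpleGraph (Fin n)) (t : ℕ) (u v : Fin n) : ℕ :=
  Nat.card {w : Fin (t+1) → Fin n // w 0 = u ∧ w (Fin.last t) = v ∧
    Function.Injective w ∧ ∀ i : Fin t, G.Adj (w i.castSucc) (w i.succ)}

/-- The `i`-th vertex on the `r`-th subdivided edge (from `u r` to `v r`, `ℓ` steps). -/
def pv (ℓ : ℕ) {k m : ℕ} (u v : Fin m → Fin k) (r : Fin m) (i : ℕ) :
    Fin k ⊕ (Fin m × Fin (ℓ - 1)) :=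
  if h0 : i = 0 then Sum.inl (u r)
  else if h : i < ℓ then Sum.inr (r, ⟨i - 1, by omega⟩)
  else Sum.inl (v r)

/-- The `(ℓ−1)`-fold subdivision of the loopless multigraph with `k` vertices and
edges `u r — v r` for `r < m`. -/
def multiSubdiv (ℓ : ℕ) {k m : ℕ} (u v : Fin m → Fin k) :
    SimpleGraph (Fin k ⊕ (Fin m × Fin (ℓ - 1))) :=
  SimpleGraph.fromRel fun a b =>
    ∃ r : Fin m, ∃ i : ℕ, i < ℓ ∧ a = pv ℓ u v r i ∧ b = pv ℓ u v r (i + 1)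

/-- Membership in the family `F_ℓ` of `(ℓ−1)`-fold subdivisions of finite loopless
multigraphs. -/
def InFamilyF (ℓ : ℕ) {N : ℕ} (F : SimpleGraph (Fin N)) : Prop :=
  ∃ (k m : ℕ) (u v : Fin m → Fin k), 1 ≤ k ∧ (∀ r, u r ≠ v r) ∧
    Nonempty (F ≃g multiSubdiv ℓ u v)

/-- The edges of a simple graph on `Fin k`, as ordered pairs `(i,j)` with `i < j`. -/
abbrev edgeIdx {k : ℕ} (F : SimpleGraph (Fin k)) : Type :=
  {q : Fin k × Fin k // q.1 < q.2 ∧ F.Adj q.1 q.2}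

/-- The `i`-th vertex on the subdivision of the edge `e` (`t` steps). -/
def spv (t : ℕ) {k : ℕ} {F : SimpleGraph (Fin k)} (e : edgeIdx F) (i : ℕ) :
    Fin k ⊕ (edgeIdx F × Fin (t - 1)) :=
  if h0 : i = 0 then Sum.inl e.1.1
  else if h : i < t then Sum.inr (e, ⟨i - 1, by omega⟩)
  else Sum.inl e.1.2

/-- The `t`-subdivision `Sub_t(F)` of a simple graph `F`: each edge is replaced by a
path of length `t` through `t−1` new internal vertices. -/
def subdiv (t : ℕ) {k : ℕ} (F : SimpleGraph (Fin k)) :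
    SimpleGraph (Fin k ⊕ (edgeIdx F × Fin (t - 1))) :=
  SimpleGraph.fromRel fun a b =>
    ∃ e : edgeIdx F, ∃ i : ℕ, i < t ∧ a = spv t e i ∧ b = spv t e (i + 1)

/-- The `t`-th power kernel `κ^t`. -/
def kpow (κ : ℝ → ℝ → ℝ) : ℕ → ℝ → ℝ → ℝ
  | 0 => fun _ _ => 0
  | 1 => κ
  | (n + 2) => fun x y => ∫ z in Icc (0:ℝ) 1, kpow κ (n + 1) x z * κ z y

/-- `φ : Fin ℓ → Fin n` is a homomorphism from `F` to `G`. -/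
def IsHom {α β : Type*} (F : SimpleGraph α) (G : SimpleGraph β) (φ : α → β) : Prop :=
  ∀ i j, F.Adj i j → G.Adj (φ i) (φ j)

/-- `F` is flat over its induced subgraph `F'` on the first `ℓ` vertices, for the
sequence `(G_n)` with normalizing function `p`. -/
def FlatOver (p : ℕ → ℝ) (G : ∀ n, SimpleGraph (Fin n)) {k ℓ : ℕ} (h : ℓ ≤ k)
    (F : SimpleGraph (Fin k)) : Prop :=
  ∀ ε > (0:ℝ), ∀ᶠ n in atTop,
    ((Finset.univ.filter (fun φ : Fin ℓ → Fin n =>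
        IsHom (F.comap (Fin.castLE h)) (G n) φ ∧
        ε * ((n:ℝ) ^ (k - ℓ) * p n ^ (edgeCount F - edgeCount (F.comap (Fin.castLE h)))) <
          |((Finset.univ.filter (fun ψ : Fin k → Fin n =>
              IsHom F (G n) ψ ∧ ψ ∘ Fin.castLE h = φ)).card : ℝ) -
            (n:ℝ) ^ (k - ℓ) * p n ^ (edgeCount F - edgeCount (F.comap (Fin.castLE h)))|)).card
      : ℝ)
      ≤ ε * ((Finset.univ.filter (fun φ : Fin ℓ → Fin n =>
          IsHom (F.comap (Fin.castLE h)) (G n) φ)).card : ℝ)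

/-- The set of density matrices of balanced partitions of `V(G)` into `k` nonempty
parts. -/
def MsetG (k : ℕ) {n : ℕ} (p : ℝ) (G : SimpleGraph (Fin n)) : Set (Fin k → Fin k → ℝ) :=
  {M | ∃ c : Fin n → Fin k, Function.Surjective c ∧
    (∀ a b, (fiber c a).card ≤ (fiber c b).card + 1) ∧
    M = fun a b => dDens p G (fiber c a) (fiber c b)}

/-- The closed set of density matrices of partitions of `[0,1]` into `k` parts of
measure `1/k`, for a kernel `κ`. -/
def MsetK (k : ℕ) (κ : ℝ → ℝ → ℝ) : Set (Fin k → Fin k → ℝ) :=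
  closure {M | ∃ Q : Fin k → Set ℝ, (∀ a, MeasurableSet (Q a)) ∧
    (Pairwise fun a b => Disjoint (Q a) (Q b)) ∧ (⋃ a, Q a) = Icc 0 1 ∧
    (∀ a, volume (Q a) = 1 / (k : ℝ≥0∞)) ∧
    M = fun a b => (k : ℝ)^2 * ∫ q in (Q a) ×ˢ (Q b), κ q.1 q.2}

end

/-! Identifying two distinct vertices `i`, `j` of a tree `T` on `k` vertices gives a connected
graph on `k - 1` vertices; if `T'` is a spanning tree of it, the homomorphisms `φ` of `T` with
`φ i = φ j` factor through the quotient, so there are at most `hom(T', G_n)` of them, and this is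
`O(n^(k-1) p^(k-2))` by the bound on `s_p(T', G_n)` together with induction on `k`. A union bound over the pairs `i ≠ j` makes the
non-injective homomorphisms `O(n^(k-1) p^(k-2)) = o(n^k p^(k-1))`, because `n p → ∞`. The claims
about `t_p` then follow from `n.descFactorial k ~ n^k`. -/

open Finset Asymptotics Topology

namespace SimpleGraph

variable {V W : Type*}

theorem Connected.map_of_surjective {G : SimpleGraph V} (hG : G.Connected) {f : V → W}
    (hf : Function.Surjective f) : (G.map f).Connected := by
  have := hG.nonempty.map f
  refine ⟨fun a b => ?_⟩
  obtain ⟨u, rfl⟩ := hf a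
  obtain ⟨v, rfl⟩ := hf b
  rw [reachable_iff_reflTransGen]
  refine Relation.ReflTransGen.lift' f (fun x y hxy => ?_) _ _
    ((reachable_iff_reflTransGen _ _).mp (hG.preconnected u v))
  change Relation.ReflTransGen _ (f x) (f y)
  by_cases hfxy : f x = f y
  · rw [hfxy]
  · exact .single ⟨hfxy, x, y, hxy, rfl, rfl⟩

end SimpleGraph

section HomCounting

variable {α α' β : Type*} [Fintype α] [Fintype α'] [Fintype β]

theorem homCount_eq_card [DecidableEq α] (F : SimpleGraph α) (G : SimpleGraph β) :
    homCount F G = #{φ : α → β | IsHom F G φ} := by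
  let e : (F →g G) ≃ {φ : α → β // IsHom F G φ} :=
    { toFun := fun f => ⟨f, fun _ _ h => f.map_rel h⟩
      invFun := fun φ => ⟨φ.1, fun h => φ.2 _ _ h⟩ }
  rw [homCount, Nat.card_congr e, Nat.card_eq_fintype_card, Fintype.card_subtype]

theorem embCount_eq_card [DecidableEq α] [DecidableEq β] (F : SimpleGraph α)
    (G : SimpleGraph β) :
    embCount F G = #{φ : α → β | IsHom F G φ ∧ Function.Injective φ} := by
  let e : {f : F →g G // Function.Injective f}
      ≃ {φ : α → β // IsHom F G φ ∧ Function.Injective φ} :=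
    { toFun := fun f => ⟨f.1, fun _ _ h => f.1.map_rel h, f.2⟩
      invFun := fun φ => ⟨⟨φ.1, fun h => φ.2.1 _ _ h⟩, φ.2.2⟩ }
  rw [embCount, Nat.card_congr e, Nat.card_eq_fintype_card, Fintype.card_subtype]

theorem homCount_sub_embCount_eq_card [DecidableEq α] [DecidableEq β] (F : SimpleGraph α)
    (G : SimpleGraph β) :
    (homCount F G : ℝ) - embCount F G
      = #{φ : α → β | IsHom F G φ ∧ ¬ Function.Injective φ} := by
  rw [homCount_eq_card, embCount_eq_card, ← filter_filter, ← filter_filter,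
    ← card_filter_add_card_filter_not (fun φ : α → β => Function.Injective φ)]
  push_cast
  ring

theorem homCount_le_homCount_of_le {F F' : SimpleGraph α} (h : F' ≤ F) (G : SimpleGraph β) :
    homCount F G ≤ homCount F' G := by
  rw [homCount_eq_card, homCount_eq_card]
  exact Finset.card_le_card fun φ hφ => by
    simp only [Finset.mem_filter, Finset.mem_univ, true_and] at hφ ⊢
    exact fun u v huv => hφ u v (h huv)

theorem card_filter_not_injective_le_sum [DecidableEq α] [DecidableEq β]
    (P : (α → β) → Prop) :
    #{φ : α → β | P φ ∧ ¬ Function.Injective φ}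
      ≤ ∑ q ∈ (univ : Finset α).offDiag, #{φ : α → β | P φ ∧ φ q.1 = φ q.2} := by
  refine (Finset.card_le_card fun φ hφ => ?_).trans card_biUnion_le
  simp only [Finset.mem_filter, Finset.mem_univ, true_and] at hφ
  obtain ⟨u, v, huv, hne⟩ := Function.not_injective_iff.mp hφ.2
  exact mem_biUnion.mpr ⟨(u, v), by simp [hne], by simp [hφ.1, huv]⟩

theorem card_isHom_factor_le_homCount_map [DecidableEq α] [DecidableEq α'] (F : SimpleGraph α)
    (G : SimpleGraph β) {f : α → α'} (hf : Function.Surjective f) :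
    #{φ : α → β | IsHom F G φ ∧ ∀ u v, f u = f v → φ u = φ v}
      ≤ homCount (F.map f) G := by
  rw [homCount_eq_card]
  let S : Finset (α' → β) := {ψ | IsHom (F.map f) G ψ}
  refine (Finset.card_le_card (t := S.image (· ∘ f)) fun φ hφ => ?_).trans card_image_le
  simp only [Finset.mem_filter, Finset.mem_univ, true_and] at hφ
  have hfac : ∀ u, φ (Function.surjInv hf (f u)) = φ u :=
    fun u => hφ.2 _ _ (Function.surjInv_eq hf _)
  refine mem_image.mpr ⟨φ ∘ Function.surjInv hf, ?_, funext fun u => hfac u⟩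
  simp only [S, Finset.mem_filter, Finset.mem_univ, true_and]
  rintro _ _ ⟨-, u, v, huv, rfl, rfl⟩
  simpa only [Function.comp_apply, hfac] using hφ.1 u v huv

end HomCounting

theorem exists_isTree_card_hom_eq_le_homCount {m : ℕ} {T : SimpleGraph (Fin (m + 2))}
    (hT : T.Connected) {i j : Fin (m + 2)} (hij : i ≠ j) :
    ∃ T' : SimpleGraph (Fin (m + 1)), T'.IsTree ∧
      ∀ {β : Type*} [Fintype β] [DecidableEq β] (G : SimpleGraph β),
        #{φ : Fin (m + 2) → β | IsHom T G φ ∧ φ i = φ j} ≤ homCount T' G := by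
  -- `ρ` sends `j` to (the index of) `i` and numbers the other vertices through `j.succAbove`.
  have hρ : ∀ v, ∃ a, j.succAbove a = if v = j then i else v := fun v =>
    Fin.exists_succAbove_eq (by split_ifs with h <;> [exact hij; exact h])
  choose ρ hρ using hρ
  have hρ_surj : Function.Surjective ρ := fun a =>
    ⟨j.succAbove a, Fin.succAbove_right_injective (by rw [hρ, if_neg (Fin.succAbove_ne j a)])⟩
  obtain ⟨T', hT'le, hT'⟩ := (hT.map_of_surjective hρ_surj).exists_isTree_le
  refine ⟨T', hT', fun G => ?_⟩
  refine le_trans (Finset.card_le_card fun φ hφ => ?_)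
    ((card_isHom_factor_le_homCount_map T G hρ_surj).trans (homCount_le_homCount_of_le hT'le G))
  simp only [Finset.mem_filter, Finset.mem_univ, true_and] at hφ ⊢
  have hφρ : ∀ v, φ (j.succAbove (ρ v)) = φ v := fun v => by
    rw [hρ]
    split_ifs with h
    · rw [h, hφ.2]
    · rfl
  exact ⟨hφ.1, fun u v huv => by rw [← hφρ u, huv, hφρ v]⟩

theorem sDen_nonneg {α β : Type*} [Fintype α] [Fintype β] {p : ℝ} (hp : 0 ≤ p)
    (F : SimpleGraph α) (G : SimpleGraph β) : 0 ≤ sDen p F G := by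
  unfold sDen
  positivity

theorem edgeCount_eq_of_isTree {α : Type*} [Fintype α] {T : SimpleGraph α} (hT : T.IsTree) :
    edgeCount T = Fintype.card α - 1 := by
  rw [edgeCount, Nat.card_eq_fintype_card, ← SimpleGraph.edgeFinset_card, ← hT.card_edgeFinset]
  rfl

section Asymptotics

variable {p : ℕ → ℝ} {G : ∀ n, SimpleGraph (Fin n)}

theorem isLittleO_pow_mul_pow_succ (hpn : Tendsto (fun n : ℕ => (n : ℝ) * p n) atTop atTop)
    (k : ℕ) :
    (fun n : ℕ => (n : ℝ) ^ (k + 1) * p n ^ k) =o[atTop]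
      fun n => (n : ℝ) ^ (k + 2) * p n ^ (k + 1) := by
  have h := (isBigO_refl (fun n : ℕ => (n : ℝ) ^ (k + 1) * p n ^ k) atTop).mul_isLittleO
    ((isLittleO_one_left_iff ℝ).mpr (tendsto_norm_atTop_atTop.comp hpn))
  simpa only [mul_one, fun n : ℕ => show (n : ℝ) ^ (k + 1) * p n ^ k * (n * p n)
    = (n : ℝ) ^ (k + 2) * p n ^ (k + 1) by ring] using h

theorem embCount_isBigO_of_sDen_le (hp : ∀ n, 0 < p n) {α : Type*} [Fintype α]
    (F : SimpleGraph α) {M : ℝ} (hM : ∀ n, sDen (p n) F (G n) ≤ M) :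
    (fun n => (embCount F (G n) : ℝ)) =O[atTop]
      fun n => (n : ℝ) ^ Fintype.card α * p n ^ edgeCount F := by
  refine .of_bound M ((eventually_ge_atTop (Fintype.card α)).mono fun n hn => ?_)
  have hdesc : 0 < (n.descFactorial (Fintype.card α) : ℝ) :=
    Nat.cast_pos.mpr (Nat.descFactorial_pos.mpr hn)
  have hpow : (n.descFactorial (Fintype.card α) : ℝ) ≤ (n : ℝ) ^ Fintype.card α := by
    exact_mod_cast Nat.descFactorial_le_pow n _
  have hpn := hp n
  have hM0 : 0 ≤ M := (sDen_nonneg hpn.le F (G n)).trans (hM n)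
  have hemb := hM n
  rw [sDen, Fintype.card_fin, div_le_iff₀ (by positivity)] at hemb
  rw [Real.norm_natCast, Real.norm_of_nonneg (by positivity)]
  calc (embCount F (G n) : ℝ)
      ≤ M * (p n ^ edgeCount F * n.descFactorial (Fintype.card α)) := hemb
    _ ≤ M * ((n : ℝ) ^ Fintype.card α * p n ^ edgeCount F) := by
      rw [mul_comm (p n ^ _)]
      gcongr

theorem homCount_sub_embCount_isLittleO (hp : ∀ n, 0 < p n)
    (hpn : Tendsto (fun n : ℕ => (n : ℝ) * p n) atTop atTop)
    (htree : ∀ (m : ℕ) (T : SimpleGraph (Fin m)), T.IsTree →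
      ∃ M : ℝ, ∀ n, sDen (p n) T (G n) ≤ M) :
    ∀ (k : ℕ) (T : SimpleGraph (Fin k)), T.IsTree →
      (fun n => (homCount T (G n) : ℝ) - embCount T (G n)) =o[atTop]
        fun n => (n : ℝ) ^ k * p n ^ (k - 1)
  | 0, _, hT => isEmptyElim hT.connected.nonempty.some
  | 1, T, _ => by
    simp [homCount_sub_embCount_eq_card, Function.injective_of_subsingleton]
  | m + 2, T, hT => by
    have hhom : ∀ T' : SimpleGraph (Fin (m + 1)), T'.IsTree →
        (fun n => (homCount T' (G n) : ℝ)) =O[atTop] fun n => (n : ℝ) ^ (m + 1) * p n ^ m := by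
      intro T' hT'
      obtain ⟨M, hM⟩ := htree _ T' hT'
      have hemb := embCount_isBigO_of_sDen_le hp T' hM
      rw [edgeCount_eq_of_isTree hT', Fintype.card_fin] at hemb
      simpa using hemb.add (homCount_sub_embCount_isLittleO hp hpn htree (m + 1) T' hT').isBigO
    have hpair : ∀ q ∈ (univ : Finset (Fin (m + 2))).offDiag,
        (fun n => (#{φ : Fin (m + 2) → Fin n | IsHom T (G n) φ ∧ φ q.1 = φ q.2} : ℝ))
          =o[atTop] fun n => (n : ℝ) ^ (m + 2) * p n ^ (m + 1) := by
      intro q hq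
      obtain ⟨T', hT', hle⟩ :=
        exists_isTree_card_hom_eq_le_homCount hT.connected (mem_offDiag.mp hq).2.2
      refine ((isBigO_of_le _ fun n => ?_).trans (hhom T' hT')).trans_isLittleO
        (isLittleO_pow_mul_pow_succ hpn m)
      simpa only [Real.norm_natCast, Nat.cast_le] using hle (G n)
    refine (isBigO_of_le _ fun n => ?_).trans_isLittleO (IsLittleO.fun_sum hpair)
    rw [homCount_sub_embCount_eq_card, Real.norm_natCast, Real.norm_of_nonneg (by positivity)]
    exact_mod_cast card_filter_not_injective_le_sum (IsHom T (G n))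

end Asymptotics

theorem tendsto_descFactorial_div_pow (k : ℕ) :
    Tendsto (fun n : ℕ => (n.descFactorial k : ℝ) / (n : ℝ) ^ k) atTop (𝓝 1) := by
  have hz : ∀ᶠ n : ℕ in atTop, (n : ℝ) ^ k ≠ 0 :=
    (eventually_ge_atTop 1).mono fun n hn => pow_ne_zero _ (Nat.cast_ne_zero.mpr (by omega))
  exact (isEquivalent_iff_tendsto_one hz).mp (isEquivalent_descFactorial k)

theorem tDen_sub_sDen_eq {α β : Type*} [Fintype α] [Fintype β] {p : ℝ} (hp : p ≠ 0)
    (F : SimpleGraph α) (G : SimpleGraph β) (hcard : Fintype.card α ≤ Fintype.card β) :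
    tDen p F G - sDen p F G
      = ((homCount F G : ℝ) - embCount F G) /
          ((Fintype.card β : ℝ) ^ Fintype.card α * p ^ edgeCount F)
        + sDen p F G * ((Fintype.card β).descFactorial (Fintype.card α)
          / (Fintype.card β : ℝ) ^ Fintype.card α - 1) := by
  have hdesc : ((Fintype.card β).descFactorial (Fintype.card α) : ℝ) ≠ 0 :=
    Nat.cast_ne_zero.mpr (Nat.descFactorial_pos.mpr hcard).ne'
  simp only [tDen, sDen]
  field_simp
  ring

/-- For trees, non-injective homomorphisms are negligible:
`hom − emb = o(n^k p^{k−1})`, so `t_p(T,G_n) − s_p(T,G_n) → 0` and `t_p` is bounded. -/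
theorem tree_noninjective_negligible (p : ℕ → ℝ) (hp : ∀ n, p n ∈ Ioc (0:ℝ) 1)
    (hpn : Tendsto (fun n : ℕ => (n:ℝ) * p n) atTop atTop)
    (G : ∀ n, SimpleGraph (Fin n))
    (htree : ∀ (m : ℕ) (T : SimpleGraph (Fin m)), T.IsTree →
      ∃ M : ℝ, ∀ n, sDen (p n) T (G n) ≤ M) :
    ∀ (k : ℕ) (T : SimpleGraph (Fin k)), T.IsTree →
      (Tendsto (fun n => ((homCount T (G n) : ℝ) - (embCount T (G n) : ℝ)) /
          ((n:ℝ) ^ k * p n ^ (k - 1))) atTop (nhds 0)) ∧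
      Tendsto (fun n => tDen (p n) T (G n) - sDen (p n) T (G n)) atTop (nhds 0) ∧
      ∃ M : ℝ, ∀ n, tDen (p n) T (G n) ≤ M := by
  intro k T hT
  have hp0 : ∀ n, 0 < p n := fun n => (hp n).1
  have hnoninj := (homCount_sub_embCount_isLittleO hp0 hpn htree k T hT).tendsto_div_nhds_zero
  obtain ⟨M, hM⟩ := htree k T hT
  have hsDen_bdd : IsBoundedUnder (· ≤ ·) atTop fun n => ‖sDen (p n) T (G n)‖ :=
    isBoundedUnder_of ⟨M, fun n => by
      rw [Real.norm_of_nonneg (sDen_nonneg (hp0 n).le T (G n))]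
      exact hM n⟩
  have hdiff : Tendsto (fun n => tDen (p n) T (G n) - sDen (p n) T (G n)) atTop (𝓝 0) := by
    have hdesc :
        Tendsto (fun n : ℕ => (n.descFactorial k : ℝ) / (n : ℝ) ^ k - 1) atTop (𝓝 0) := by
      simpa using (tendsto_descFactorial_div_pow k).sub_const 1
    have hlim := hnoninj.add (hdesc.zero_mul_isBoundedUnder_le hsDen_bdd)
    rw [add_zero] at hlim
    refine hlim.congr' ((eventually_ge_atTop k).mono fun n hn => ?_)
    dsimp only
    rw [tDen_sub_sDen_eq (hp0 n).ne' T (G n) (by simpa using hn), edgeCount_eq_of_isTree hT]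
    simp only [Fintype.card_fin]
    ring
  obtain ⟨B, hB⟩ := hdiff.bddAbove_range
  exact ⟨hnoninj, hdiff, B + M, fun n => by linarith [hB (mem_range_self n), hM n]⟩
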